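/- arXiv:1305.2775 — 9 statements merged into one kernel-verified Lean document; each statement's English description precedes it below -/
import Mathlib

section
/- For all real x, y and natural number m, the sum over j from 0 to m of binomial(m,j) * Gamma(x+j) * Gamma(y+m-j) equals Gamma(x) * Gamma(y) * Gamma(x+y+m) / Gamma(x+y), provided x, y, and x+y are positive. -/
theorem gamma_vandermonde (x y : ℝ) (m : ℕ) (hx : 0 < x) (hy : 0 < y)
    (hxy : 0 < x + y) :
    ∑ j ∈ Finset.range (m + 1),
      (m.choose j : ℝ) * Real.Gamma (x + j) * Real.Gamma (y + m - j) =
    Real.Gamma x * Real.Gamma y * Real.Gamma (x + y + m) / Real.Gamma (x + y) := by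
  have hGxy : Real.Gamma (x + y) ≠ 0 := (Real.Gamma_pos_of_pos hxy).ne'
  induction m with
  | zero =>
    simp
    rw [mul_div_assoc, div_self hGxy, mul_one]
  | succ m ih =>
    have key : ∑ j ∈ Finset.range (m + 1 + 1),
        ((m+1).choose j : ℝ) * Real.Gamma (x + j) * Real.Gamma (y + (m+1 : ℕ) - j) =
        (x + y + m) * ∑ j ∈ Finset.range (m + 1),
          (m.choose j : ℝ) * Real.Gamma (x + j) * Real.Gamma (y + m - j) := by
      rw [Finset.sum_range_succ']
      have hsplit : ∀ i ∈ Finset.range (m + 1),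
          ((m+1).choose (i+1) : ℝ) * Real.Gamma (x + (i+1 : ℕ)) *
            Real.Gamma (y + (m+1 : ℕ) - (i+1 : ℕ)) =
          (m.choose i : ℝ) * Real.Gamma (x + i + 1) * Real.Gamma (y + m - i)
          + (m.choose (i+1) : ℝ) * Real.Gamma (x + (i+1:ℕ)) *
              Real.Gamma (y + (m+1 : ℕ) - (i+1:ℕ)) := by
        intro i _
        rw [Nat.choose_succ_succ]
        push_cast
        have e1 : y + ((m:ℝ)+1) - ((i:ℝ)+1) = y + m - i := by ring
        rw [e1, ← add_assoc x]
        ring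
      rw [Finset.sum_congr rfl hsplit, Finset.sum_add_distrib, add_assoc]
      have hB : (∑ i ∈ Finset.range (m + 1),
          (m.choose (i+1) : ℝ) * Real.Gamma (x + (i+1:ℕ)) *
            Real.Gamma (y + (m+1 : ℕ) - (i+1:ℕ)))
          + ((m+1).choose 0 : ℝ) * Real.Gamma (x + (0:ℕ)) *
            Real.Gamma (y + (m+1 : ℕ) - (0:ℕ)) =
          ∑ j ∈ Finset.range (m + 1),
            (m.choose j : ℝ) * Real.Gamma (x + j) * Real.Gamma (y + (m+1:ℕ) - j) := by
        have h2 : ∑ j ∈ Finset.range (m + 2),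
            (m.choose j : ℝ) * Real.Gamma (x + j) * Real.Gamma (y + (m+1:ℕ) - j) =
            ∑ j ∈ Finset.range (m + 1),
            (m.choose j : ℝ) * Real.Gamma (x + j) * Real.Gamma (y + (m+1:ℕ) - j) := by
          rw [Finset.sum_range_succ]
          simp [Nat.choose_succ_self]
        conv_rhs => rw [← h2, Finset.sum_range_succ']
        simp
      rw [hB, ← Finset.sum_add_distrib, Finset.mul_sum]
      refine Finset.sum_congr rfl fun j hj => ?_
      have hj' : (j : ℝ) ≤ m := by
        exact_mod_cast Nat.le_of_lt_succ (Finset.mem_range.mp hj)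
      have hx' : (0:ℝ) < x + j := by positivity
      have hy' : (0:ℝ) < y + m - j := by linarith
      have e2 : y + ((m:ℝ)+1) - j = (y + m - j) + 1 := by ring
      push_cast
      rw [e2, Real.Gamma_add_one hy'.ne',
        show x + (j:ℝ) + 1 = (x + j) + 1 by ring, Real.Gamma_add_one hx'.ne']
      ring
    rw [key, ih]
    have hpos : (0:ℝ) < x + y + m := by positivity
    have hG : Real.Gamma (x + y + (m+1 : ℕ)) = (x + y + m) * Real.Gamma (x + y + m) := by
      push_cast
      rw [show x + y + ((m:ℝ)+1) = (x + y + m) + 1 by ring,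
        Real.Gamma_add_one hpos.ne']
    rw [hG]
    ring
end

section
/- For all positive real x, y and natural number m, the sum over j from 0 to m of binomial(m,j) * (m-j) * Gamma(x+j) * Gamma(y+m-j) equals m * y * Gamma(x) * Gamma(y) * Gamma(x+y+m) / ((x+y) * Gamma(x+y)). -/
lemma gamma_vandermonde_aux (m : ℕ) : ∀ x y : ℝ, 0 < x → 0 < y →
    ∑ j ∈ Finset.range (m + 1), (m.choose j : ℝ) * Real.Gamma (x + j) * Real.Gamma (y + m - j)
      = Real.Gamma x * Real.Gamma y * Real.Gamma (x + y + m) / Real.Gamma (x + y) := by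
  induction m with
  | zero =>
    intro x y hx hy
    have h := (Real.Gamma_pos_of_pos (by linarith : (0:ℝ) < x + y)).ne'
    simp
    field_simp
  | succ n ih =>
    intro x y hx hy
    have hx1 : (0:ℝ) < x + 1 := by linarith
    have hy1 : (0:ℝ) < y + 1 := by linarith
    have e1 := ih (x+1) y hx1 hy
    have e2 := ih x (y+1) hx hy1
    have h2 : ∑ i ∈ Finset.range (n+1), (n.choose i : ℝ) * Real.Gamma (x + i) * Real.Gamma ((y+1) + n - i)
        = ∑ j ∈ Finset.range (n+2), (n.choose j : ℝ) * Real.Gamma (x + j) * Real.Gamma ((y+1) + n - j) := by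
      rw [show (∑ j ∈ Finset.range (n+2), (n.choose j : ℝ) * Real.Gamma (x + j) * Real.Gamma ((y+1) + n - j))
          = (∑ j ∈ Finset.range (n+1), (n.choose j : ℝ) * Real.Gamma (x + j) * Real.Gamma ((y+1) + n - j))
            + (n.choose (n+1) : ℝ) * Real.Gamma (x + (n+1:ℕ)) * Real.Gamma ((y+1) + n - (n+1:ℕ))
          from Finset.sum_range_succ _ (n+1)]
      simp
    have h1 : ∑ j ∈ Finset.range (n + 1 + 1), ((n+1).choose j : ℝ) * Real.Gamma (x + j) * Real.Gamma (y + (n+1:ℕ) - j)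
        = (∑ i ∈ Finset.range (n+1), (n.choose i : ℝ) * Real.Gamma ((x+1) + i) * Real.Gamma (y + n - i))
          + (∑ i ∈ Finset.range (n+1), (n.choose i : ℝ) * Real.Gamma (x + i) * Real.Gamma ((y+1) + n - i)) := by
      rw [Finset.sum_range_succ' _ (n+1), h2, Finset.sum_range_succ' _ (n+1)]
      have : ∀ i ∈ Finset.range (n+1),
          (((n+1).choose (i+1) : ℝ)) * Real.Gamma (x + ↑(i+1)) * Real.Gamma (y + ((n:ℝ)+1) - ↑(i+1))
          = (n.choose i : ℝ) * Real.Gamma ((x+1) + i) * Real.Gamma (y + n - i)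
            + (n.choose (i+1) : ℝ) * Real.Gamma (x + ↑(i+1)) * Real.Gamma ((y+1) + n - ↑(i+1)) := by
        intro i hi
        have g1 : x + ((i:ℝ)+1) = (x+1) + i := by ring
        have g2 : y + ((n:ℝ)+1) - ((i:ℝ)+1) = y + n - i := by ring
        have g3 : (y+1) + (n:ℝ) - ((i:ℝ)+1) = y + (n:ℝ) - i := by ring
        rw [Nat.choose_succ_succ]
        push_cast
        rw [g1, g2, g3]
        ring
      push_cast
      rw [Finset.sum_congr rfl (by exact_mod_cast this), Finset.sum_add_distrib]
      simp only [Nat.choose_zero_right, Nat.cast_one]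
      push_cast
      rw [show y + ((n:ℝ)+1) - 0 = y + 1 + (n:ℝ) - 0 by ring, add_assoc]
    rw [h1, e1, e2]
    have hxy : (0:ℝ) < x + y := by linarith
    have hG : Real.Gamma (x + y) ≠ 0 := (Real.Gamma_pos_of_pos hxy).ne'
    have hGx : Real.Gamma (x + 1) = x * Real.Gamma x := Real.Gamma_add_one hx.ne'
    have hGy : Real.Gamma (y + 1) = y * Real.Gamma y := Real.Gamma_add_one hy.ne'
    have hGxy : Real.Gamma (x + y + 1) = (x+y) * Real.Gamma (x+y) := Real.Gamma_add_one hxy.ne'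
    have a1 : x + 1 + y + n = x + y + 1 + n := by ring
    have a2 : x + (y + 1) + n = x + y + 1 + n := by ring
    have a3 : x + 1 + y = x + y + 1 := by ring
    have a4 : x + (y + 1) = x + y + 1 := by ring
    rw [a1, a2, a3, a4, hGx, hGy, hGxy]
    have : x + y + ((n:ℝ)+1) = x + y + 1 + n := by ring
    push_cast
    rw [this]
    field_simp

theorem gamma_vandermonde_weighted (x y : ℝ) (m : ℕ) (hx : 0 < x) (hy : 0 < y) :
    ∑ j ∈ Finset.range (m + 1),
      (m.choose j : ℝ) * ((m : ℝ) - j) * Real.Gamma (x + j) * Real.Gamma (y + m - j) =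
    m * y * Real.Gamma x * Real.Gamma y * Real.Gamma (x + y + m) /
      ((x + y) * Real.Gamma (x + y)) := by
  cases m with
  | zero => simp
  | succ n =>
    have hy1 : (0:ℝ) < y + 1 := by linarith
    have hxy : (0:ℝ) < x + y := by linarith
    have key : ∀ j ∈ Finset.range (n+1),
        (((n+1).choose j : ℝ)) * (((n:ℝ)+1) - j) * Real.Gamma (x + j) * Real.Gamma (y + ((n:ℝ)+1) - j)
        = ((n:ℝ)+1) * ((n.choose j : ℝ) * Real.Gamma (x + j) * Real.Gamma ((y+1) + n - j)) := by
      intro j hj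
      have hjn : j ≤ n := Nat.lt_succ_iff.mp (Finset.mem_range.mp hj)
      have hc : ((n+1).choose j : ℝ) * (((n:ℝ)+1) - j) = ((n:ℝ)+1) * (n.choose j) := by
        have h0 := Nat.choose_mul_succ_eq n j
        have h' : ((n.choose j * (n+1) : ℕ) : ℝ) = (((n+1).choose j * (n+1-j) : ℕ) : ℝ) := by
          exact_mod_cast congrArg (Nat.cast (R := ℝ)) h0
        push_cast [Nat.cast_sub (by omega : j ≤ n+1)] at h'
        linarith
      have ha : y + ((n:ℝ)+1) - j = (y+1) + n - j := by ring
      rw [ha, hc]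
      ring
    rw [Finset.sum_range_succ]
    push_cast
    rw [Finset.sum_congr rfl key, ← Finset.mul_sum,
      gamma_vandermonde_aux n x (y+1) hx hy1]
    have hGy : Real.Gamma (y + 1) = y * Real.Gamma y := Real.Gamma_add_one hy.ne'
    have hGxy : Real.Gamma (x + (y+1)) = (x+y) * Real.Gamma (x+y) := by
      rw [show x + (y+1) = (x+y) + 1 by ring, Real.Gamma_add_one hxy.ne']
    have hGn : Real.Gamma (x + (y+1) + n) = Real.Gamma (x + y + ((n:ℝ)+1)) := by
      congr 1; ring
    rw [hGy, hGxy, hGn]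
    have hG : Real.Gamma (x + y) ≠ 0 := (Real.Gamma_pos_of_pos hxy).ne'
    field_simp
    ring
end

section
/- The function u(x,t) = 1/(1 + k·exp((x - (5/√6)t)/√6))² with k > 0 satisfies the Fisher-Kolmogorov equation ∂u/∂t = ∂²u/∂x² + u(1-u) for all real x and t. -/
/-!
Writing `ξ = x - c t` with `c = 5 / √6`, the function is `u = w(ξ)²` for the logistic profile
`w(ξ) = 1 / (1 + k e^{ξ/√6})`, which solves `w' = a w (1 - w)` with `a = -1/√6`. Hence
`(w²)' = 2a w² (1 - w)` and `(w²)'' = 2a² w² (1 - w) (2 - 3w)` are polynomials in `w`, and the Fisher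
equation for the travelling wave, `-c (w²)' = (w²)'' + w² (1 - w²)`, reduces to `6a² = 1` and `c = -5a`.
-/

open Real

lemma deriv_comp_const_sub_mul (φ : ℝ → ℝ) (x c t : ℝ) :
    deriv (fun t => φ (x - c * t)) t = -c * deriv φ (x - c * t) := by
  rw [deriv_comp_mul_left (f := fun y => φ (x - y)), deriv_comp_const_sub, smul_eq_mul, neg_mul,
    mul_neg]

lemma deriv_deriv_comp_sub_const (φ : ℝ → ℝ) (a x : ℝ) :
    deriv (deriv fun x => φ (x - a)) x = deriv (deriv φ) (x - a) := by
  rw [show (deriv fun x => φ (x - a)) = fun x => deriv φ (x - a) from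
    funext fun _ => deriv_comp_sub_const .., deriv_comp_sub_const]

section SquareOfLogistic

variable {w : ℝ → ℝ} {a : ℝ}

lemma deriv_sq_of_logistic (hw : ∀ ξ, HasDerivAt w (a * w ξ * (1 - w ξ)) ξ) :
    deriv (fun ξ => w ξ ^ 2) = fun ξ => 2 * a * w ξ ^ 2 * (1 - w ξ) := by
  funext ξ
  have h : HasDerivAt (fun ξ => w ξ ^ 2) _ ξ := (hw ξ).pow 2
  rw [h.deriv]
  ring

lemma deriv_deriv_sq_of_logistic (hw : ∀ ξ, HasDerivAt w (a * w ξ * (1 - w ξ)) ξ) (ξ : ℝ) :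
    deriv (deriv fun ξ => w ξ ^ 2) ξ = 2 * a ^ 2 * w ξ ^ 2 * (1 - w ξ) * (2 - 3 * w ξ) := by
  have h : HasDerivAt (fun ξ => 2 * a * w ξ ^ 2 * (1 - w ξ)) _ ξ :=
    (((hw ξ).pow 2).const_mul (2 * a)).mul ((hw ξ).const_sub 1)
  rw [deriv_sq_of_logistic hw, h.deriv, Pi.pow_apply]
  ring

theorem sq_travelingWave_solves_fisher (hw : ∀ ξ, HasDerivAt w (a * w ξ * (1 - w ξ)) ξ)
    (ha : 6 * a ^ 2 = 1) {c : ℝ} (hc : c = -5 * a) (x t : ℝ) :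
    deriv (fun t => w (x - c * t) ^ 2) t =
      deriv (deriv fun x => w (x - c * t) ^ 2) x + w (x - c * t) ^ 2 * (1 - w (x - c * t) ^ 2) := by
  rw [deriv_comp_const_sub_mul (fun ξ => w ξ ^ 2), deriv_deriv_comp_sub_const (fun ξ => w ξ ^ 2),
    deriv_deriv_sq_of_logistic hw, deriv_sq_of_logistic hw]
  set v := w (x - c * t)
  subst hc
  linear_combination v ^ 2 * (1 - v) * (1 + v) * ha

end SquareOfLogistic

lemma hasDerivAt_one_div_one_add_mul_exp_div {k : ℝ} (hk : 0 ≤ k) (s ξ : ℝ) :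
    HasDerivAt (fun ξ => 1 / (1 + k * exp (ξ / s)))
      (-(1 / s) * (1 / (1 + k * exp (ξ / s))) * (1 - 1 / (1 + k * exp (ξ / s)))) ξ := by
  have hpos : 0 < 1 + k * exp (ξ / s) := by positivity
  have h : HasDerivAt (fun ξ => 1 / (1 + k * exp (ξ / s)))
      (-(k * (exp (ξ / s) * (1 / s))) / (1 + k * exp (ξ / s)) ^ 2) ξ := by
    simpa only [one_div] using
      ((((hasDerivAt_id' ξ).div_const s).exp.const_mul k).const_add 1).fun_inv hpos.ne'
  refine h.congr_deriv ?_
  field_simp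
  ring

theorem ablowitz_zeppetella_solves_fisher (k : ℝ) (hk : 0 < k) (u : ℝ → ℝ → ℝ)
    (hu : ∀ x t, u x t =
      1 / (1 + k * Real.exp ((x - (5 / Real.sqrt 6) * t) / Real.sqrt 6)) ^ 2) :
    ∀ x t : ℝ,
      deriv (fun t' => u x t') t =
        deriv (deriv (fun x' => u x' t)) x + u x t * (1 - u x t) := by
  set w : ℝ → ℝ := fun ξ => 1 / (1 + k * exp (ξ / √6))
  have hu' : u = fun x t => w (x - 5 / √6 * t) ^ 2 := by
    funext x t
    rw [hu, div_pow, one_pow]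
  have ha : 6 * (-(1 / √6)) ^ 2 = 1 := by
    rw [neg_sq, div_pow, sq_sqrt (by norm_num)]
    norm_num
  subst hu'
  exact sq_travelingWave_solves_fisher (hasDerivAt_one_div_one_add_mul_exp_div hk.le √6) ha
    (by ring)
end

section
/- If U(s) = 1/(1 + k·e^{s/√6})² with k > 0, then U satisfies the polynomial relation 3(U'(s))² + 2√6 U(s)U'(s) + 2(1 - U(s))U(s)² = 0 for all real s. -/
/-! With `w = 1 / (1 + k e^{s/√6})` the wave is `U = w²`, and `w` solves the logistic equation
`√6 w' = -w (1 - w)`. Hence `√6 U' = -2 w² (1 - w)`, and substituting into the polynomial gives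
`2 w⁴ (1 - w) ((1 - w) - 2 + (1 + w)) = 0`. -/

open Real

theorem hasDerivAt_inv_one_add_mul_exp_div (k a s : ℝ) (h : 1 + k * exp (s / a) ≠ 0) :
    HasDerivAt (fun t => (1 + k * exp (t / a))⁻¹)
      (-((1 + k * exp (s / a))⁻¹ * (1 - (1 + k * exp (s / a))⁻¹)) / a) s := by
  have hexp : HasDerivAt (fun t => 1 + k * exp (t / a)) (k * (exp (s / a) * (1 / a))) s :=
    (((hasDerivAt_id s).div_const a).exp.const_mul k).const_add 1
  refine (hexp.fun_inv h).congr_deriv ?_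
  field_simp
  ring

theorem ablowitz_zeppetella_poly_eq_zero {a w : ℝ} (ha : a ^ 2 = 6) :
    3 * (-(2 * w ^ 2 * (1 - w)) / a) ^ 2 + 2 * a * w ^ 2 * (-(2 * w ^ 2 * (1 - w)) / a)
      + 2 * (1 - w ^ 2) * (w ^ 2) ^ 2 = 0 := by
  have ha0 : a ≠ 0 := by rintro rfl; norm_num at ha
  field_simp
  rw [ha]
  ring

theorem ablowitz_zeppetella_algebraic (k : ℝ) (hk : 0 < k) (U : ℝ → ℝ)
    (hU : ∀ s, U s = 1 / (1 + k * Real.exp (s / Real.sqrt 6)) ^ 2) :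
    ∀ s : ℝ,
      3 * (deriv U s) ^ 2 + 2 * Real.sqrt 6 * U s * deriv U s
        + 2 * (1 - U s) * (U s) ^ 2 = 0 := by
  intro s
  set w : ℝ → ℝ := fun t => (1 + k * exp (t / √6))⁻¹
  have hUw : U = fun t => w t ^ 2 := funext fun t => by rw [hU, one_div, inv_pow]
  have hw : HasDerivAt w (-(w s * (1 - w s)) / √6) s :=
    hasDerivAt_inv_one_add_mul_exp_div k _ s (by positivity)
  have hU' : deriv U s = -(2 * w s ^ 2 * (1 - w s)) / √6 := by
    rw [hUw, (hw.fun_pow 2).deriv]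
    ring
  rw [hU', hUw]
  exact ablowitz_zeppetella_poly_eq_zero (sq_sqrt (by norm_num))
end

section
/- The function u(x,t) = (1 - 8k² - c²) + 12k²·tanh²(k(x - ct)) satisfies the Boussinesq equation ∂²u/∂t² + u·∂²u/∂x² - ∂²u/∂x² + (∂u/∂x)² - ∂⁴u/∂x⁴ = 0 for all real x and t, for any real constants k and c. -/
open Real

/-!
Both `x ↦ u x t` and `t ↦ u x t` have the form `y ↦ α + β tanh² (a y + b)`, with slopes
`a = k` and `a = -k c`, so every derivative in the equation is `β aⁿ` times a derivative
of `tanh²`. Since `tanh' = 1 - tanh²`, those are polynomials in `tanh`,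
and the equation collapses to a polynomial identity in `tanh (k (x - c t))`.
-/

lemma Real.hasDerivAt_tanh (x : ℝ) : HasDerivAt tanh (1 - tanh x ^ 2) x := by
  have h := (hasDerivAt_sinh x).div (hasDerivAt_cosh x) (cosh_pos x).ne'
  rw [show sinh / cosh = tanh from funext fun y => (tanh_eq_sinh_div_cosh y).symm] at h
  refine h.congr_deriv ?_
  rw [tanh_eq_sinh_div_cosh]
  field_simp [(cosh_pos x).ne']

lemma deriv_comp_mul_add (f : ℝ → ℝ) (a b y : ℝ) :
    deriv (fun y => f (a * y + b)) y = a * deriv f (a * y + b) := by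
  rw [← smul_eq_mul, ← deriv_comp_add_const]
  exact deriv_comp_mul_left a (fun z => f (z + b)) y

lemma iterate_deriv_comp_mul_add (f : ℝ → ℝ) (a b : ℝ) (n : ℕ) :
    deriv^[n] (fun y => f (a * y + b)) = fun y => a ^ n * deriv^[n] f (a * y + b) := by
  induction n with
  | zero => simp
  | succ n ih =>
    funext y
    simp only [Function.iterate_succ_apply', ih, deriv_const_mul_field', deriv_comp_mul_add]
    ring

lemma iterate_succ_deriv_const_add_mul (f : ℝ → ℝ) (α β : ℝ) (n : ℕ) :
    deriv^[n + 1] (fun y => α + β * f y) = fun y => β * deriv^[n + 1] f y := by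
  induction n with
  | zero => funext y; simp [deriv_const_add', deriv_const_mul_field']
  | succ n ih => simp only [Function.iterate_succ_apply' _ (n + 1), ih, deriv_const_mul_field']

lemma deriv_tanh_sq : deriv (fun x => tanh x ^ 2) = fun x => 2 * tanh x - 2 * tanh x ^ 3 :=
  funext fun x => ((hasDerivAt_tanh x).pow 2).deriv.trans (by norm_num; ring)

lemma iterate_deriv_two_tanh_sq :
    deriv^[2] (fun x => tanh x ^ 2) = fun x => 2 - 8 * tanh x ^ 2 + 6 * tanh x ^ 4 := by
  rw [Function.iterate_succ_apply', Function.iterate_one, deriv_tanh_sq]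
  exact funext fun x => (((hasDerivAt_tanh x).const_mul 2).sub
    (((hasDerivAt_tanh x).pow 3).const_mul 2)).deriv.trans (by norm_num; ring)

lemma iterate_deriv_three_tanh_sq :
    deriv^[3] (fun x => tanh x ^ 2) =
      fun x => -16 * tanh x + 40 * tanh x ^ 3 - 24 * tanh x ^ 5 := by
  rw [Function.iterate_succ_apply', iterate_deriv_two_tanh_sq]
  exact funext fun x => ((((hasDerivAt_tanh x).pow 2).const_mul 8).const_sub 2 |>.add
    (((hasDerivAt_tanh x).pow 4).const_mul 6)).deriv.trans (by norm_num; ring)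

lemma iterate_deriv_four_tanh_sq :
    deriv^[4] (fun x => tanh x ^ 2) =
      fun x => -16 + 136 * tanh x ^ 2 - 240 * tanh x ^ 4 + 120 * tanh x ^ 6 := by
  rw [Function.iterate_succ_apply', iterate_deriv_three_tanh_sq]
  exact funext fun x => ((((hasDerivAt_tanh x).const_mul (-16)).add
    (((hasDerivAt_tanh x).pow 3).const_mul 40)).sub
    (((hasDerivAt_tanh x).pow 5).const_mul 24)).deriv.trans (by norm_num; ring)

theorem boussinesq_traveling_wave (k c : ℝ) (u : ℝ → ℝ → ℝ)
    (hu : ∀ x t, u x t = (1 - 8 * k ^ 2 - c ^ 2)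
        + 12 * k ^ 2 * (Real.tanh (k * (x - c * t))) ^ 2) :
    ∀ x t : ℝ,
      deriv (deriv (fun t' => u x t')) t
        + u x t * deriv (deriv (fun x' => u x' t)) x
        - deriv (deriv (fun x' => u x' t)) x
        + (deriv (fun x' => u x' t) x) ^ 2
        - deriv^[4] (fun x' => u x' t) x = 0 := by
  intro x t
  have ux (n : ℕ) : deriv^[n + 1] (fun x' => u x' t) x =
      12 * k ^ 2 * (k ^ (n + 1) * deriv^[n + 1] (fun ξ => tanh ξ ^ 2) (k * (x - c * t))) := by
    have hx : (fun x' => u x' t) = fun x' => (1 - 8 * k ^ 2 - c ^ 2)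
        + 12 * k ^ 2 * (fun ξ => tanh ξ ^ 2) (k * x' + -(k * c * t)) :=
      funext fun x' => by rw [hu]; ring_nf
    rw [hx, iterate_succ_deriv_const_add_mul,
      iterate_deriv_comp_mul_add (fun ξ => tanh ξ ^ 2)]
    ring_nf
  have ut (n : ℕ) : deriv^[n + 1] (fun t' => u x t') t =
      12 * k ^ 2 * ((-(k * c)) ^ (n + 1) * deriv^[n + 1] (fun ξ => tanh ξ ^ 2) (k * (x - c * t))) := by
    have ht : (fun t' => u x t') = fun t' => (1 - 8 * k ^ 2 - c ^ 2)
        + 12 * k ^ 2 * (fun ξ => tanh ξ ^ 2) (-(k * c) * t' + k * x) :=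
      funext fun t' => by rw [hu]; ring_nf
    rw [ht, iterate_succ_deriv_const_add_mul,
      iterate_deriv_comp_mul_add (fun ξ => tanh ξ ^ 2)]
    ring_nf
  have ux1 : deriv (fun x' => u x' t) x = _ := ux 0
  have ux2 : deriv (deriv (fun x' => u x' t)) x = _ := ux 1
  have ut2 : deriv (deriv (fun t' => u x t')) t = _ := ut 1
  rw [ux1, ux2, ut2, ux 3, hu, Function.iterate_one, deriv_tanh_sq, iterate_deriv_two_tanh_sq,
    iterate_deriv_four_tanh_sq]
  ring
end

section
/- The algebraic curve f(x,y) = y² + 2√(2/3)(1-x)y + (2/3)x(1-x)² = 0 is invariant for the system x' = -y, y' = -x - (5/√6)y + x², i.e., there exists a constant c₀ such that (-y)·∂f/∂x + (-x - (5/√6)y + x²)·∂f/∂y = c₀·f(x,y) for all x, y. -/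
theorem fisher_invariant_algebraic_curve (F : ℝ → ℝ → ℝ)
    (hF : ∀ x y, F x y = y ^ 2 + 2 * Real.sqrt (2 / 3) * (1 - x) * y
        + (2 / 3) * x * (1 - x) ^ 2) :
    ∃ c₀ : ℝ, ∀ x y : ℝ,
      (-y) * deriv (fun x' => F x' y) x
        + (-x - (5 / Real.sqrt 6) * y + x ^ 2) * deriv (fun y' => F x y') y
      = c₀ * F x y := by
  refine ⟨-Real.sqrt 6, fun x y => ?_⟩
  set s := Real.sqrt (2 / 3) with hs
  have hdx : deriv (fun x' => F x' y) x
      = -2 * s * y + (2/3) * (1 - x)^2 - (4/3) * x * (1 - x) := by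
    have hfun : (fun x' => F x' y) = fun x' => y ^ 2 + 2 * s * (1 - x') * y
        + (2 / 3) * x' * (1 - x') ^ 2 := funext fun x' => hF x' y
    rw [hfun]
    have h : HasDerivAt (fun x' : ℝ => y ^ 2 + 2 * s * (1 - x') * y
        + (2 / 3) * x' * (1 - x') ^ 2)
        (-2 * s * y + (2/3) * (1 - x)^2 - (4/3) * x * (1 - x)) x := by
      have h1 : HasDerivAt (fun x' : ℝ => x') 1 x := hasDerivAt_id x
      have ha := (((h1.const_sub 1).const_mul (2*s)).mul_const y).const_add (y^2)
      have h2 := (h1.mul (((h1.const_sub 1).pow 2))).const_mul (2/3 : ℝ)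
      have hb := ha.add h2
      convert hb using 1
      · rfl
      · rfl
      · funext t; simp only [Pi.add_apply, Pi.mul_apply, Pi.pow_apply]; ring
      · push_cast; simp only [Pi.pow_apply]; ring
    exact h.deriv
  have hdy : deriv (fun y' => F x y') y = 2 * y + 2 * s * (1 - x) := by
    have hfun : (fun y' => F x y') = fun y' => y' ^ 2 + 2 * s * (1 - x) * y'
        + (2 / 3) * x * (1 - x) ^ 2 := funext fun y' => hF x y'
    rw [hfun]
    have h : HasDerivAt (fun y' : ℝ => y' ^ 2 + 2 * s * (1 - x) * y'
        + (2 / 3) * x * (1 - x) ^ 2) (2 * y + 2 * s * (1 - x)) y := by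
      have h1 : HasDerivAt (fun y' : ℝ => y') 1 y := hasDerivAt_id y
      have hb := ((h1.pow 2).add ((h1.const_mul (2*s*(1-x))).add_const
        ((2/3) * x * (1 - x) ^ 2)))
      convert hb using 1
      · rfl
      · rfl
      · funext t; simp only [Pi.add_apply, Pi.mul_apply, Pi.pow_apply]; ring
      · push_cast; ring
    exact h.deriv
  rw [hdx, hdy, hF]
  have h6 : (0:ℝ) < Real.sqrt 6 := Real.sqrt_pos.2 (by norm_num)
  have h6sq : Real.sqrt 6 ^ 2 = 6 := Real.sq_sqrt (by norm_num)
  have hs3 : s = Real.sqrt 6 / 3 := by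
    rw [hs, show (2/3 : ℝ) = 6 / 3^2 by norm_num, show (6:ℝ)/3^2 = 6 * (3:ℝ)⁻¹^2 by ring,
      Real.sqrt_mul (by norm_num), Real.sqrt_sq (by norm_num)]
    ring
  have h5 : (5:ℝ) / Real.sqrt 6 = 5 * Real.sqrt 6 / 6 := by
    rw [div_eq_div_iff h6.ne' (by norm_num)]
    linear_combination -5 * h6sq
  rw [hs3, h5]
  linear_combination ((y - x*y)/9) * h6sq
end

section
/- Let c ≥ 2. If the quadratic system x' = -y, y' = -x - cy + x² has an invariant algebraic curve f(x,y) = h_n(x)yⁿ + ··· + h₁(x)y + h₀(x) with h_n not identically zero and cofactor k(x,y) = c₀ + c₁x + c₂y (so that -y·∂f/∂x + (-x-cy+x²)·∂f/∂y = k·f), then c₂ = 0 and h_n is constant. -/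
open Polynomial

theorem constant_cofactor (c : ℝ) (hc : 2 ≤ c) (n : ℕ) (h : ℕ → Polynomial ℝ)
    (hn : h n ≠ 0) (c₀ c₁ c₂ : ℝ)
    (hinv : ∀ x y : ℝ,
      -y * ∑ j ∈ Finset.range (n + 1), ((Polynomial.derivative (h j)).eval x) * y ^ j
        + (-x - c * y + x ^ 2) *
            ∑ j ∈ Finset.range (n + 1), (j : ℝ) * (h j).eval x * y ^ (j - 1)
      = (c₀ + c₁ * x + c₂ * y) *
          ∑ j ∈ Finset.range (n + 1), (h j).eval x * y ^ j) :
    c₂ = 0 ∧ ∃ a : ℝ, h n = Polynomial.C a := by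
  have key : -(Polynomial.derivative (h n)) = Polynomial.C c₂ * h n := by
    apply Polynomial.funext
    intro x
    set A : Polynomial ℝ := ∑ j ∈ Finset.range (n+1),
      Polynomial.C ((Polynomial.derivative (h j)).eval x) * Polynomial.X ^ j with hA
    set B : Polynomial ℝ := ∑ j ∈ Finset.range (n+1),
      Polynomial.C ((j : ℝ) * (h j).eval x) * Polynomial.X ^ (j - 1) with hB
    set D : Polynomial ℝ := ∑ j ∈ Finset.range (n+1),
      Polynomial.C ((h j).eval x) * Polynomial.X ^ j with hD
    have hpoly : -Polynomial.X * A
        + (Polynomial.C (-x + x^2) - Polynomial.C c * Polynomial.X) * B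
        = (Polynomial.C (c₀ + c₁ * x) + Polynomial.C c₂ * Polynomial.X) * D := by
      apply Polynomial.funext
      intro y
      simp only [hA, hB, hD, Polynomial.eval_add, Polynomial.eval_mul, Polynomial.eval_neg,
        Polynomial.eval_X, Polynomial.eval_sub, Polynomial.eval_C, Polynomial.eval_finset_sum,
        Polynomial.eval_pow]
      linear_combination hinv x y
    have hcoeff := congrArg (fun p => Polynomial.coeff p (n+1)) hpoly
    have hAn : A.coeff n = (Polynomial.derivative (h n)).eval x := by
      simp [hA, Polynomial.finset_sum_coeff, Polynomial.coeff_C_mul, Polynomial.coeff_X_pow,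
        Finset.sum_ite_eq]
    have hDn : D.coeff n = (h n).eval x := by
      simp [hD, Polynomial.finset_sum_coeff, Polynomial.coeff_C_mul, Polynomial.coeff_X_pow,
        Finset.sum_ite_eq]
    have hDn1 : D.coeff (n+1) = 0 := by
      rw [hD, Polynomial.finset_sum_coeff]
      apply Finset.sum_eq_zero
      intro j hj
      simp only [Finset.mem_range] at hj
      rw [Polynomial.coeff_C_mul, Polynomial.coeff_X_pow]
      have : ¬ (n + 1 = j) := by omega
      simp [this]
    have hBn : B.coeff n = 0 := by
      rw [hB, Polynomial.finset_sum_coeff]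
      apply Finset.sum_eq_zero
      intro j hj
      simp only [Finset.mem_range] at hj
      rw [Polynomial.coeff_C_mul, Polynomial.coeff_X_pow]
      rcases Nat.eq_zero_or_pos j with h0 | h0
      · simp [h0]
      · have : ¬ (n = j - 1) := by omega
        simp [this]
    have hBn1 : B.coeff (n+1) = 0 := by
      rw [hB, Polynomial.finset_sum_coeff]
      apply Finset.sum_eq_zero
      intro j hj
      simp only [Finset.mem_range] at hj
      rw [Polynomial.coeff_C_mul, Polynomial.coeff_X_pow]
      rcases Nat.eq_zero_or_pos j with h0 | h0
      · simp [h0]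
      · have : ¬ (n + 1 = j - 1) := by omega
        simp [this]
    -- expand coefficient computation in hcoeff
    rw [show (-Polynomial.X * A : Polynomial ℝ) = -(Polynomial.X * A) by ring] at hcoeff
    rw [Polynomial.coeff_add, Polynomial.coeff_neg, Polynomial.coeff_X_mul, hAn] at hcoeff
    rw [sub_mul, Polynomial.coeff_sub, Polynomial.coeff_C_mul, hBn1] at hcoeff
    rw [show (Polynomial.C c * Polynomial.X * B : Polynomial ℝ)
        = Polynomial.C c * (Polynomial.X * B) by ring] at hcoeff
    rw [Polynomial.coeff_C_mul, Polynomial.coeff_X_mul, hBn] at hcoeff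
    rw [show ((Polynomial.C (c₀ + c₁ * x) + Polynomial.C c₂ * Polynomial.X) * D : Polynomial ℝ)
        = Polynomial.C (c₀ + c₁ * x) * D + Polynomial.C c₂ * (Polynomial.X * D) by ring,
      Polynomial.coeff_add, Polynomial.coeff_C_mul, hDn1, Polynomial.coeff_C_mul,
      Polynomial.coeff_X_mul, hDn] at hcoeff
    simp only [Polynomial.eval_neg, Polynomial.eval_mul, Polynomial.eval_C]
    linarith [hcoeff]
  -- now conclude
  by_cases hc2 : c₂ = 0
  · subst hc2
    simp only [map_zero, zero_mul] at key
    have hder : Polynomial.derivative (h n) = 0 := by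
      have := congrArg Neg.neg key
      simpa using this
    have hdeg : (h n).natDegree = 0 :=
      Polynomial.natDegree_eq_zero_of_derivative_eq_zero hder
    exact ⟨rfl, (h n).coeff 0, (Polynomial.eq_C_of_natDegree_eq_zero hdeg)⟩
  · exfalso
    have hder : Polynomial.derivative (h n) = -(Polynomial.C c₂) * h n := by
      rw [neg_mul, ← key, neg_neg]
    rcases Nat.eq_zero_or_pos (h n).natDegree with h0 | h0
    · obtain ⟨a, ha⟩ := Polynomial.natDegree_eq_zero.mp h0
      rw [← ha] at hn
      have : Polynomial.derivative (h n) = 0 := by rw [← ha]; simp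
      rw [this, ← ha] at hder
      have := hder.symm
      rw [neg_mul, neg_eq_zero, ← Polynomial.C_mul, Polynomial.C_eq_zero] at this
      rcases mul_eq_zero.mp this with h1 | h1
      · exact hc2 h1
      · exact hn (by rw [h1]; simp)
    · have hlt : (Polynomial.derivative (h n)).natDegree < (h n).natDegree :=
        Polynomial.natDegree_derivative_lt (by omega)
      have heq : (-(Polynomial.C c₂) * h n).natDegree = (h n).natDegree := by
        rw [neg_mul, Polynomial.natDegree_neg, Polynomial.natDegree_C_mul hc2]
      rw [hder, heq] at hlt
      omega
end

section
/- Let m ≥ 1 be a natural number and c ≥ 2 real, and let λ⁻ = (-c - √(c²+4))/2 and λ⁺ = (-c + √(c²+4))/2. If c₀ ∈ {λ⁺, λ⁻, -c} satisfies 5c₀ + 6mc = 0, then c₀ = λ⁻, m = 1, and c = 5/√6. -/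
theorem cofactor_forces_speed (m : ℕ) (hm : 1 ≤ m) (c : ℝ) (hc : 2 ≤ c) (c₀ : ℝ)
    (hc₀ : c₀ = (-c + Real.sqrt (c ^ 2 + 4)) / 2 ∨
           c₀ = (-c - Real.sqrt (c ^ 2 + 4)) / 2 ∨ c₀ = -c)
    (heq : 5 * c₀ + 6 * m * c = 0) :
    c₀ = (-c - Real.sqrt (c ^ 2 + 4)) / 2 ∧ m = 1 ∧ c = 5 / Real.sqrt 6 := by
  have hc0 : (0:ℝ) < c := by linarith
  set s := Real.sqrt (c ^ 2 + 4) with hs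
  have hs2 : s ^ 2 = c ^ 2 + 4 := Real.sq_sqrt (by positivity)
  have hsnn : 0 ≤ s := Real.sqrt_nonneg _
  have hsc : c < s := by nlinarith
  have hm1 : (1:ℝ) ≤ (m:ℝ) := by exact_mod_cast hm
  rcases hc₀ with h | h | h
  · exfalso
    rw [h] at heq
    nlinarith
  · rw [h] at heq
    have key : 5 * s = (12 * (m:ℝ) - 5) * c := by linarith
    have hsq : 25 * (c^2 + 4) = (12*(m:ℝ)-5)^2 * c^2 := by nlinarith
    have hm2 : m = 1 := by
      by_contra hne
      have h2 : (2:ℝ) ≤ (m:ℝ) := by exact_mod_cast (by omega : 2 ≤ m)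
      nlinarith
    subst hm2
    have hc2 : c^2 = 25/6 := by push_cast at hsq; nlinarith
    refine ⟨h, rfl, ?_⟩
    have h6 : Real.sqrt 6 ^ 2 = 6 := Real.sq_sqrt (by norm_num)
    have h6pos : (0:ℝ) < Real.sqrt 6 := Real.sqrt_pos.mpr (by norm_num)
    rw [eq_div_iff (ne_of_gt h6pos)]
    nlinarith [sq_nonneg (c * Real.sqrt 6 - 5), mul_pos hc0 h6pos]
  · exfalso
    rw [h] at heq
    nlinarith
end

section
/- For q a positive natural number, the function U(s) = (1 + k·e^{qs/√(q+1)})^{-1/q} with k > 0 satisfies U'(s) = (1/√(q+1))·U(s)(U(s)^q - 1) for all real s, and u(x,t) = U(x - t/√(q+1)) satisfies the PDE ∂u/∂t = u^{q+1}(1 - u^q) + ∂²u/∂x². -/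
open Real

/- With `G s = 1 + k e^{qs/b}` one has `G' = (q/b)(G - 1)`, and `U = G^{-1/q}` satisfies
`U^q = 1/G`, so `U' = -(1/b) U (G - 1)/G = (1/b) U (U^q - 1)`. For a travelling wave
`u = U(x - ct)` of this ODE, `u_t = -c U'` and `u_xx = U'' = c U' ((q+1) U^q - 1)`; the choice
`c² (q+1) = 1` makes the reaction term `u^{q+1}(1 - u^q) = -U^q U'/c` cancel the `(q+1) U^q`
part of `u_xx`, leaving `-c U'`. -/

theorem hasDerivAt_one_add_mul_exp_rpow {q : ℕ} (hq : q ≠ 0) {k : ℝ} (hk : 0 ≤ k)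
    (b s : ℝ) :
    HasDerivAt (fun s => (1 + k * exp (q * s / b)) ^ (-(1 : ℝ) / q))
      (1 / b * (1 + k * exp (q * s / b)) ^ (-(1 : ℝ) / q) *
        (((1 + k * exp (q * s / b)) ^ (-(1 : ℝ) / q)) ^ q - 1)) s := by
  set G := 1 + k * exp (q * s / b)
  have hG : 0 < G := by positivity
  have hq' : (q : ℝ) ≠ 0 := Nat.cast_ne_zero.mpr hq
  have hexp : HasDerivAt (fun s => (q : ℝ) * s / b) (q / b) s := by
    simpa using ((hasDerivAt_id s).const_mul (q : ℝ)).div_const b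
  have hpow_q : (G ^ (-(1 : ℝ) / q)) ^ q = G⁻¹ := by
    rw [← rpow_natCast, ← rpow_mul hG.le, div_mul_cancel₀ _ hq', rpow_neg_one]
  convert ((hexp.exp.const_mul k).const_add 1).rpow_const (p := -(1 : ℝ) / q) (Or.inl hG.ne')
    using 1
  rw [hpow_q, rpow_sub hG, rpow_one]
  field_simp
  ring

section ProfileODE

variable {U : ℝ → ℝ} {c : ℝ} {q : ℕ}

theorem hasDerivAt_deriv_of_hasDerivAt_mul_pow_sub_one
    (hU : ∀ s, HasDerivAt U (c * U s * (U s ^ q - 1)) s) (s : ℝ) :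
    HasDerivAt (deriv U) (c * (c * U s * (U s ^ q - 1)) * ((q + 1) * U s ^ q - 1)) s := by
  have hderiv : deriv U = fun s => c * (U s ^ (q + 1) - U s) := by
    funext s
    rw [(hU s).deriv]
    ring
  rw [hderiv]
  have h : HasDerivAt (fun s => c * (U s ^ (q + 1) - U s)) _ s :=
    (((hU s).fun_pow (q + 1)).sub (hU s)).const_mul c
  convert h using 1
  rw [Nat.add_sub_cancel]
  push_cast
  ring

theorem travelingWave_solves_reactionDiffusion
    (hU : ∀ s, HasDerivAt U (c * U s * (U s ^ q - 1)) s) (hc : c ^ 2 * (q + 1) = 1) (x t : ℝ) :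
    deriv (fun t' => U (x - c * t')) t =
      U (x - c * t) ^ (q + 1) * (1 - U (x - c * t) ^ q)
        + deriv (deriv fun x' => U (x' - c * t)) x := by
  have hspeed : HasDerivAt (fun t' => x - c * t') (-c) t := by
    simpa using ((hasDerivAt_id t).const_mul c).const_sub x
  have ht : HasDerivAt (fun t' => U (x - c * t'))
      (c * U (x - c * t) * (U (x - c * t) ^ q - 1) * -c) t :=
    (hU _).comp t hspeed
  have hx : deriv (fun x' => U (x' - c * t)) = fun x' => deriv U (x' - c * t) :=
    funext fun x' => deriv_comp_sub_const U _ x'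
  rw [ht.deriv, hx, deriv_comp_sub_const,
    (hasDerivAt_deriv_of_hasDerivAt_mul_pow_sub_one hU _).deriv]
  linear_combination (U (x - c * t) ^ (q + 1) * (1 - U (x - c * t) ^ q)) * hc

end ProfileODE

theorem power_nonlinearity_traveling_wave (q : ℕ) (hq : 1 ≤ q) (k : ℝ) (hk : 0 < k)
    (U : ℝ → ℝ)
    (hU : ∀ s, U s =
      (1 + k * Real.exp ((q : ℝ) * s / Real.sqrt (q + 1))) ^ (-(1 : ℝ) / q))
    (u : ℝ → ℝ → ℝ) (hu : ∀ x t, u x t = U (x - t / Real.sqrt (q + 1))) :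
    (∀ s : ℝ, deriv U s = (1 / Real.sqrt (q + 1)) * U s * ((U s) ^ q - 1)) ∧
    (∀ x t : ℝ,
      deriv (fun t' => u x t') t =
        (u x t) ^ (q + 1) * (1 - (u x t) ^ q)
          + deriv (deriv (fun x' => u x' t)) x) := by
  set c := 1 / √(q + 1 : ℝ)
  have hODE (s : ℝ) : HasDerivAt U (c * U s * (U s ^ q - 1)) s := by
    simpa only [← hU] using
      hasDerivAt_one_add_mul_exp_rpow (q := q) (by omega) hk.le (√(q + 1)) s
  obtain rfl : u = fun x t => U (x - c * t) := by
    funext x t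
    rw [hu, one_div_mul_eq_div]
  have hc : c ^ 2 * (q + 1) = 1 := by
    rw [div_pow, sq_sqrt (by positivity)]
    field_simp
  exact ⟨fun s => (hODE s).deriv, travelingWave_solves_reactionDiffusion hODE hc⟩
end
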